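/- With the connection of the previous setting (paracontact metric (κ,μ)-Lie algebra with κ≠−1), define φ by φξ=0, φE1=E1, φE2=−E2, η dual to ξ, and h by hξ=0, hE1=εE2, hE2=ε(κ+1)E1. Then the curvature satisfies R(X,Y)ξ = κ(η(Y)X − η(X)Y) + μ(η(Y)hX − η(X)hY) for all X, Y in the Lie algebra. -/

import Mathlib

/-!
The nine prescribed values `∇_{e_i} e_j` on the basis `ξ, E1, E2` determine the bilinear map `∇`,
so `∇` is given by an explicit coordinate formula. Then `R(X,Y)ξ` is a polynomial identity in the
coordinates of `X` and `Y`, which holds modulo `ε ^ 2 = 1`.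
-/

noncomputable section

def ξ : Fin 3 → ℝ := ![1, 0, 0]
def E1 : Fin 3 → ℝ := ![0, 1, 0]
def E2 : Fin 3 → ℝ := ![0, 0, 1]

/-- Bracket [E1,E2] = 2ξ, [ξ,E1] = (1−μ/2)E1 + εE2, [ξ,E2] = −ε(κ+1)E1 − (1−μ/2)E2. -/
def br (κ μ ε : ℝ) (x y : Fin 3 → ℝ) : Fin 3 → ℝ :=
  (x 1 * y 2 - x 2 * y 1) • ![2, 0, 0] +
  (x 0 * y 1 - x 1 * y 0) • ![0, 1 - μ / 2, ε] +
  (x 0 * y 2 - x 2 * y 0) • ![0, -(ε * (κ + 1)), -(1 - μ / 2)]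

/-- η dual to ξ. -/
def η (x : Fin 3 → ℝ) : ℝ := x 0

/-- h: hξ = 0, hE1 = εE2, hE2 = ε(κ+1)E1. -/
def h (κ ε : ℝ) (x : Fin 3 → ℝ) : Fin 3 → ℝ := ![0, ε * (κ + 1) * x 2, ε * x 1]

lemma eq_smul_ξ_add_smul_E1_add_smul_E2 (x : Fin 3 → ℝ) : x = x 0 • ξ + x 1 • E1 + x 2 • E2 := by
  funext i
  fin_cases i <;> simp [ξ, E1, E2]

def kmConnection (κ μ ε : ℝ) (X V : Fin 3 → ℝ) : Fin 3 → ℝ :=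
  ![(ε * X 1 - X 2) * V 1 + (X 1 - ε * (κ + 1) * X 2) * V 2,
    (-X 1 + ε * (κ + 1) * X 2) * V 0 - μ / 2 * X 0 * V 1,
    (-(ε * X 1) + X 2) * V 0 + μ / 2 * X 0 * V 2]

theorem eq_kmConnection {κ μ ε : ℝ} {nabla : (Fin 3 → ℝ) →ₗ[ℝ] (Fin 3 → ℝ) →ₗ[ℝ] (Fin 3 → ℝ)}
    (h1 : nabla ξ ξ = 0)
    (h2 : nabla ξ E1 = -(μ / 2) • E1)
    (h3 : nabla ξ E2 = (μ / 2) • E2)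
    (h4 : nabla E1 ξ = -E1 - ε • E2)
    (h5 : nabla E1 E1 = ε • ξ)
    (h6 : nabla E1 E2 = ξ)
    (h7 : nabla E2 ξ = (ε * (κ + 1)) • E1 + E2)
    (h8 : nabla E2 E1 = -ξ)
    (h9 : nabla E2 E2 = -(ε * (κ + 1)) • ξ) (X V : Fin 3 → ℝ) :
    nabla X V = kmConnection κ μ ε X V := by
  rw [eq_smul_ξ_add_smul_E1_add_smul_E2 X, eq_smul_ξ_add_smul_E1_add_smul_E2 V]
  simp only [map_add, map_smul, LinearMap.add_apply, LinearMap.smul_apply,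
    h1, h2, h3, h4, h5, h6, h7, h8, h9]
  funext i
  fin_cases i <;>
    simp only [kmConnection, ξ, E1, E2, Fin.zero_eta, Fin.mk_one, Fin.reduceFinMk, Fin.isValue,
      Pi.add_apply, Pi.smul_apply, Pi.sub_apply, Pi.neg_apply, Pi.zero_apply, smul_eq_mul,
      Matrix.cons_val_zero, Matrix.cons_val_one, Matrix.cons_val_two, Matrix.head_cons, Matrix.tail_cons] <;>
    ring

theorem kmConnection_curvature_ξ {κ μ ε : ℝ} (hε : ε ^ 2 = 1) (X Y : Fin 3 → ℝ) :
    kmConnection κ μ ε X (kmConnection κ μ ε Y ξ) - kmConnection κ μ ε Y (kmConnection κ μ ε X ξ)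
      - kmConnection κ μ ε (br κ μ ε X Y) ξ =
      κ • (η Y • X - η X • Y) + μ • (η Y • h κ ε X - η X • h κ ε Y) := by
  funext i
  fin_cases i <;>
    simp only [kmConnection, br, η, h, ξ, Fin.zero_eta, Fin.mk_one, Fin.reduceFinMk, Fin.isValue,
      Pi.add_apply, Pi.smul_apply, Pi.sub_apply, smul_eq_mul,
      Matrix.cons_val_zero, Matrix.cons_val_one, Matrix.cons_val_two, Matrix.head_cons, Matrix.tail_cons]
  · ring
  -- `ε ^ 2 = 1` is what turns `1 - ε ^ 2 * (κ + 1)` into `-κ`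
  · linear_combination (-(κ + 1) * (X 0 * Y 1 - X 1 * Y 0)) * hε
  · linear_combination (-(κ + 1) * (X 0 * Y 2 - X 2 * Y 0)) * hε

/-- With the Levi-Civita connection of the paracontact metric (κ,μ)-Lie algebra, the
curvature satisfies R(X,Y)ξ = κ(η(Y)X − η(X)Y) + μ(η(Y)hX − η(X)hY). -/
theorem paracontact_km_curvature (κ μ ε : ℝ) (hε : ε = 1 ∨ ε = -1)
    (nabla : (Fin 3 → ℝ) →ₗ[ℝ] (Fin 3 → ℝ) →ₗ[ℝ] (Fin 3 → ℝ))
    (h1 : nabla ξ ξ = 0)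
    (h2 : nabla ξ E1 = -(μ / 2) • E1)
    (h3 : nabla ξ E2 = (μ / 2) • E2)
    (h4 : nabla E1 ξ = -E1 - ε • E2)
    (h5 : nabla E1 E1 = ε • ξ)
    (h6 : nabla E1 E2 = ξ)
    (h7 : nabla E2 ξ = (ε * (κ + 1)) • E1 + E2)
    (h8 : nabla E2 E1 = -ξ)
    (h9 : nabla E2 E2 = -(ε * (κ + 1)) • ξ)
    (R : (Fin 3 → ℝ) → (Fin 3 → ℝ) → (Fin 3 → ℝ) → (Fin 3 → ℝ))
    (hR : ∀ X Y Z, R X Y Z =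
      nabla X (nabla Y Z) - nabla Y (nabla X Z) - nabla (br κ μ ε X Y) Z) :
    ∀ X Y, R X Y ξ =
      κ • (η Y • X - η X • Y) + μ • (η Y • h κ ε X - η X • h κ ε Y) := by
  intro X Y
  simp only [hR, eq_kmConnection h1 h2 h3 h4 h5 h6 h7 h8 h9]
  exact kmConnection_curvature_ξ (sq_eq_one_iff.mpr hε) X Y
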